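/- arXiv:2401.09787 — 3 statements merged into one kernel-verified Lean document; each statement's English description precedes it below -/
import Mathlib

section
/- In two-dimensional binary classification with linear classifiers through the origin and uniform distribution on the unit disk, if the line through a point x₀ and the origin makes angle θ₀ ∈ (0, π/2) with the decision boundary of g, then the least disagree metric L(g, x₀) := inf over hypotheses h disagreeing with g at x₀ of ρ(h, g) equals θ₀/π. -/
/-!
A classifier `h_w` disagrees with `g = h_v` at `x₀` exactly when `w` and `v` lie on weakly opposite
sides of the line `x₀⊥`. The triangle inequality for unoriented angles, taken through `x₀`, then
gives `∠(w, v) ≥ |π/2 - ∠(x₀, v)| = θ₀`, and the quarter turn of `x₀` towards `v` lies on `x₀⊥` and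
makes exactly the angle `θ₀` with `v`.
-/

open Real InnerProductGeometry Module
open scoped RealInnerProductSpace

theorem Real.mul_nonpos_of_sign_ne {a b : ℝ} (h : Real.sign a ≠ Real.sign b) : a * b ≤ 0 := by
  contrapose! h
  rcases mul_pos_iff.1 h with ⟨ha, hb⟩ | ⟨ha, hb⟩
  · rw [Real.sign_of_pos ha, Real.sign_of_pos hb]
  · rw [Real.sign_of_neg ha, Real.sign_of_neg hb]

namespace InnerProductGeometry

variable {E : Type*} [NormedAddCommGroup E] [InnerProductSpace ℝ E]

theorem angle_le_pi_div_two_of_inner_nonneg {x y : E} (h : 0 ≤ ⟪x, y⟫) : angle x y ≤ π / 2 :=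
  Real.arccos_le_pi_div_two.2 (div_nonneg h (by positivity))

theorem pi_div_two_le_angle_of_inner_nonpos {x y : E} (h : ⟪x, y⟫ ≤ 0) : π / 2 ≤ angle x y := by
  have := angle_le_pi_div_two_of_inner_nonneg (x := x) (y := -y) (by simpa [inner_neg_right])
  rw [angle_neg_right] at this
  linarith

theorem arcsin_abs_inner_div_norm_mul_norm (x y : E) :
    arcsin (|⟪x, y⟫| / (‖x‖ * ‖y‖)) = |π / 2 - angle x y| := by
  rw [← abs_of_nonneg (by positivity : 0 ≤ ‖x‖ * ‖y‖), ← abs_div, angle,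
    ← arcsin_eq_pi_div_two_sub_arccos]
  rcases le_total 0 (⟪x, y⟫ / (‖x‖ * ‖y‖)) with h | h
  · rw [abs_of_nonneg h, abs_of_nonneg (arcsin_nonneg.2 h)]
  · rw [abs_of_nonpos h, abs_of_nonpos (arcsin_nonpos.2 h), arcsin_neg]

theorem abs_pi_div_two_sub_angle_le_angle {x v w : E} (h : ⟪x, w⟫ * ⟪x, v⟫ ≤ 0) :
    |π / 2 - angle x v| ≤ angle w v := by
  have hxwv := angle_le_angle_add_angle x w v
  have hxvw := angle_le_angle_add_angle x v w
  rw [angle_comm v w] at hxvw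
  have := angle_nonneg w v
  rw [abs_sub_le_iff]
  rcases mul_nonpos_iff.1 h with ⟨hw, hv⟩ | ⟨hw, hv⟩
  · have := angle_le_pi_div_two_of_inner_nonneg hw
    have := pi_div_two_le_angle_of_inner_nonpos hv
    constructor <;> linarith
  · have := pi_div_two_le_angle_of_inner_nonpos hw
    have := angle_le_pi_div_two_of_inner_nonneg hv
    constructor <;> linarith

theorem angle_eq_abs_pi_div_two_sub_angle_of_cos_eq_sin {x v w : E}
    (h : cos (angle w v) = sin (angle x v)) : angle w v = |π / 2 - angle x v| := by
  have h0 := angle_nonneg x v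
  have hπ := angle_le_pi x v
  rw [← arccos_cos (angle_nonneg w v) (angle_le_pi w v), h, ← cos_pi_div_two_sub, ← cos_abs,
    arccos_cos (abs_nonneg _) (by rw [abs_le']; constructor <;> linarith [pi_pos])]

theorem _root_.Orientation.sin_angle_mul_norm_mul_norm [Fact (finrank ℝ E = 2)]
    (o : Orientation ℝ E (Fin 2)) (x y : E) :
    sin (angle x y) * (‖x‖ * ‖y‖) = |o.areaForm x y| := by
  rw [InnerProductGeometry.sin_angle_mul_norm_mul_norm, ← sqrt_sq_eq_abs,
    ← sub_eq_of_eq_add' (o.inner_sq_add_areaForm_sq x y).symm, real_inner_self_eq_norm_sq,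
    real_inner_self_eq_norm_sq]
  ring_nf

theorem exists_inner_eq_zero_angle_eq [Fact (finrank ℝ E = 2)] {x v : E} (hx : x ≠ 0)
    (hv : v ≠ 0) : ∃ w ≠ 0, ⟪x, w⟫ = 0 ∧ angle w v = |π / 2 - angle x v| := by
  have : FiniteDimensional ℝ E := .of_fact_finrank_eq_two
  let o : Orientation ℝ E (Fin 2) := (finBasisOfFinrankEq ℝ E Fact.out).orientation
  -- a quarter turn of `x`, oriented towards `v`
  obtain ⟨w, hxw, hw, hwv⟩ : ∃ w : E, ⟪x, w⟫ = 0 ∧ ‖w‖ = ‖x‖ ∧ ⟪w, v⟫ = |o.areaForm x v| := by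
    rcases le_total 0 (o.areaForm x v) with h | h
    · refine ⟨o.rightAngleRotation x, ?_, by simp, ?_⟩
      · rw [real_inner_comm, o.inner_rightAngleRotation_self]
      · rw [o.inner_rightAngleRotation_left, abs_of_nonneg h]
    · refine ⟨-o.rightAngleRotation x, ?_, by simp, ?_⟩
      · rw [inner_neg_right, real_inner_comm, o.inner_rightAngleRotation_self, neg_zero]
      · rw [inner_neg_left, o.inner_rightAngleRotation_left, abs_of_nonpos h]
  refine ⟨w, norm_ne_zero_iff.1 (hw ▸ norm_ne_zero_iff.2 hx), hxw,
    angle_eq_abs_pi_div_two_sub_angle_of_cos_eq_sin ?_⟩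
  rw [cos_angle, hw, hwv, ← o.sin_angle_mul_norm_mul_norm,
    mul_div_cancel_right₀ _ (by positivity)]

end InnerProductGeometry

/-- In 2-D binary classification with linear classifiers through the origin and `x`
uniform on the unit disk (for which the disagree metric between `h_w` and `h_v` is
`arccos (⟪w,v⟫/(‖w‖‖v‖)) / π`), the least disagree metric of a point `x₀` (not on the
decision boundary of `g = h_v`) is `θ₀ / π`, where `θ₀ = arcsin (|⟪x₀,v⟫|/(‖x₀‖‖v‖))`
is the angle between `g`'s decision boundary and the line through `x₀` and the origin. -/
theorem ldm_linear_classifiers_unit_disk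
    (v x₀ : EuclideanSpace ℝ (Fin 2)) (hv : v ≠ 0) (hx₀ : x₀ ≠ 0)
    (hboundary : (inner ℝ x₀ v : ℝ) ≠ 0)
    (θ₀ : ℝ) (hθ₀ : θ₀ = Real.arcsin (|(inner ℝ x₀ v : ℝ)| / (‖x₀‖ * ‖v‖))) :
    sInf {r : ℝ | ∃ w : EuclideanSpace ℝ (Fin 2), w ≠ 0 ∧
        Real.sign (inner ℝ x₀ w) ≠ Real.sign (inner ℝ x₀ v) ∧
        r = Real.arccos (inner ℝ w v / (‖w‖ * ‖v‖)) / π}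
      = θ₀ / π := by
  have : Fact (finrank ℝ (EuclideanSpace ℝ (Fin 2)) = 2) := ⟨finrank_euclideanSpace_fin⟩
  rw [hθ₀, arcsin_abs_inner_div_norm_mul_norm]
  refine IsLeast.csInf_eq ⟨?_, ?_⟩
  · obtain ⟨w, hw, hx₀w, hangle⟩ := exists_inner_eq_zero_angle_eq hx₀ hv
    refine ⟨w, hw, ?_, by rw [← hangle, angle]⟩
    rw [hx₀w, Real.sign_zero]
    exact fun h => hboundary (Real.sign_eq_zero_iff.1 h.symm)
  · rintro _ ⟨w, -, hsign, rfl⟩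
    gcongr
    exact abs_pi_div_two_sub_angle_le_angle (Real.mul_nonpos_of_sign_ne hsign)
end

section
/- Gaussian lower half-plane lower bound: for a 2-D isotropic Gaussian with mean (0, m) where m = sin θ₀ ∈ (0, 1] and variance σ², the measure of the lower half-plane {(x, y) : y ≤ 0} is at least 1/2 − (1/√(2π))·(σ(1 − e^{−m²/(2σ²)}) + m/σ). -/
open MeasureTheory Real ProbabilityTheory

/-!
Reflection about the mean gives `P[Y ≤ m] = 1/2`, and the density of `𝒩(m, σ²)` is at most
`1/(√(2π) σ)`, so `P[0 < Y ≤ m] ≤ m/(√(2π) σ)`. Hence `P[Y ≤ 0] ≥ 1/2 - m/(√(2π) σ)`, which is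
stronger than the claim because `σ (1 - e^{-m²/(2σ²)}) ≥ 0`; no secant bound is needed.
-/

open Set NNReal

namespace ProbabilityTheory

lemma gaussianReal_real_Iic_self (μ : ℝ) {v : ℝ≥0} (hv : v ≠ 0) :
    (gaussianReal μ v).real (Iic μ) = 1 / 2 := by
  have := nullSingletonClass_gaussianReal (μ := μ) hv
  have hsymm : (gaussianReal μ v).map (2 * μ - ·) = gaussianReal μ v := by
    rw [gaussianReal_map_const_sub, two_mul, add_sub_cancel_right]
  have hreflect : (gaussianReal μ v).real (Ioi μ) = (gaussianReal μ v).real (Iic μ) := by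
    have hpre : (2 * μ - ·) ⁻¹' Ioi μ = Iio μ := by
      ext x
      simp only [mem_preimage, mem_Ioi, mem_Iio]
      constructor <;> intro <;> linarith
    rw [← hsymm, map_measureReal_apply (by fun_prop) measurableSet_Ioi, hpre, hsymm]
    exact measureReal_congr Iio_ae_eq_Iic
  have htotal :=
    measureReal_add_measureReal_compl (μ := gaussianReal μ v) (measurableSet_Iic (a := μ))
  rw [compl_Iic, hreflect, probReal_univ] at htotal
  linarith

lemma gaussianPDFReal_le (μ : ℝ) (v : ℝ≥0) (x : ℝ) :
    gaussianPDFReal μ v x ≤ (√(2 * π * v))⁻¹ := by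
  rw [gaussianPDFReal_def]
  refine mul_le_of_le_one_right (by positivity) (exp_le_one_iff.2 ?_)
  exact div_nonpos_of_nonpos_of_nonneg (neg_nonpos.2 (sq_nonneg _)) (by positivity)

lemma gaussianReal_real_le_mul_volumeReal (μ : ℝ) {v : ℝ≥0} (hv : v ≠ 0) {s : Set ℝ}
    (hs : volume s ≠ ⊤) :
    (gaussianReal μ v).real s ≤ (√(2 * π * v))⁻¹ * volume.real s := by
  have hle : gaussianReal μ v s ≤ ENNReal.ofReal (√(2 * π * v))⁻¹ * volume s := by
    rw [gaussianReal_apply μ hv, ← setLIntegral_const]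
    exact lintegral_mono fun x ↦ ENNReal.ofReal_le_ofReal (gaussianPDFReal_le μ v x)
  have := ENNReal.toReal_mono (ENNReal.mul_ne_top ENNReal.ofReal_ne_top hs) hle
  rwa [ENNReal.toReal_mul, ENNReal.toReal_ofReal (by positivity)] at this

end ProbabilityTheory

/-- Gaussian lower half-plane lower bound: for a 2-D isotropic Gaussian with mean
`(0, m)`, `m = sin θ₀ ∈ (0,1]`, and variance `σ²`, the measure of the lower half-plane
`{(x,y) : y ≤ 0}` (equivalently, `P[Y ≤ 0]` for `Y ~ 𝒩(m, σ²)`) is at least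
`1/2 − (1/√(2π)) (σ(1 − e^{−m²/(2σ²)}) + m/σ)`. -/
theorem gaussian_lower_half_plane_bound
    (σ m : ℝ) (hσ : 0 < σ) (hm : m ∈ Set.Ioc (0:ℝ) 1) :
    ((gaussianReal m (Real.toNNReal (σ ^ 2))) (Set.Iic 0)).toReal
      ≥ 1 / 2 - (1 / Real.sqrt (2 * π)) *
          (σ * (1 - Real.exp (-(m ^ 2) / (2 * σ ^ 2))) + m / σ) := by
  set P := gaussianReal m (Real.toNNReal (σ ^ 2))
  have hv : Real.toNNReal (σ ^ 2) ≠ 0 := by simp [hσ.ne']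
  have hsqrt : √(2 * π * (Real.toNNReal (σ ^ 2) : ℝ)) = √(2 * π) * σ := by
    rw [Real.coe_toNNReal _ (sq_nonneg σ), sqrt_mul (by positivity), sqrt_sq hσ.le]
  have hsplit : P.real (Iic 0) + P.real (Ioc 0 m) = 1 / 2 := by
    rw [← measureReal_union (Iic_disjoint_Ioc le_rfl) measurableSet_Ioc,
      Iic_union_Ioc_eq_Iic hm.1.le, gaussianReal_real_Iic_self m hv]
  have hstrip : P.real (Ioc 0 m) ≤ 1 / √(2 * π) * (m / σ) := by
    have := gaussianReal_real_le_mul_volumeReal m hv (s := Ioc 0 m) measure_Ioc_lt_top.ne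
    rw [hsqrt, Real.volume_real_Ioc_of_le hm.1.le, sub_zero] at this
    convert this using 1; field_simp
  have hexp : 0 ≤ σ * (1 - exp (-(m ^ 2) / (2 * σ ^ 2))) :=
    mul_nonneg hσ.le (sub_nonneg.2 (exp_le_one_iff.2
      (div_nonpos_of_nonpos_of_nonneg (neg_nonpos.2 (sq_nonneg m)) (by positivity))))
  have hextra := mul_le_mul_of_nonneg_left hexp (by positivity : 0 ≤ 1 / √(2 * π))
  rw [← measureReal_def]
  linarith
end

section
/- Monotonicity of dual-angle disagreement under Gaussian scaling (2-D linear case): fix v = (v₁, v₂) ≠ 0 with angle θ_v, fix u₁ ∈ (0,1) and u₂ ∈ [0,1] with u₂ ∉ {θ_v/(2π), (π + θ_v)/(2π)}. Define θ(σ) implicitly by ‖v‖ sin(θ − θ_v) = σ√(−2 log u₁) sin(2π u₂ − θ) (the Box–Muller parametrization of w = v + σ√(−2 log u₁)(cos 2πu₂, sin 2πu₂)). Then ρ(σ) = |θ(σ) − θ_v|/π is strictly increasing in σ > 0. -/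
open Real InnerProductGeometry
open scoped RealInnerProductSpace

/-!
With `a = ⟪v, d⟫`, `b = ‖d‖²`, `c = ‖v‖²`, the cosine of the angle between `v + t • d` and `v`
is `(c + t a) / (‖v‖ √(c + 2 t a + t² b))`, whose derivative in `t` is
`t (a² - b c) / (‖v‖ (c + 2 t a + t² b)^{3/2})`. Strict Cauchy–Schwarz (`d` is not a multiple
of `v`) makes it negative for `t > 0`, so the angle grows strictly along the ray. The Box–Muller
radius `σ √(-2 log u₁)` is a positive multiple of `σ`.
-/

theorem hasDerivAt_div_sqrt_quadratic {a b c t : ℝ} (hq : 0 < c + 2 * t * a + t ^ 2 * b) :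
    HasDerivAt (fun t => (c + t * a) / √(c + 2 * t * a + t ^ 2 * b))
      (t * (a ^ 2 - b * c) / √(c + 2 * t * a + t ^ 2 * b) ^ 3) t := by
  have hnum : HasDerivAt (fun t => c + t * a) a t := by
    simpa using ((hasDerivAt_id t).mul_const a).const_add c
  have hden : HasDerivAt (fun t => c + 2 * t * a + t ^ 2 * b) (2 * 1 * a + 2 * t ^ 1 * b) t :=
    ((((hasDerivAt_id' t).const_mul 2).mul_const a).const_add c).add
      ((hasDerivAt_pow 2 t).mul_const b)
  have hr := sqrt_pos.2 hq
  have hr2 := sq_sqrt hq.le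
  set r := √(c + 2 * t * a + t ^ 2 * b)
  have h : HasDerivAt (fun t => (c + t * a) / √(c + 2 * t * a + t ^ 2 * b))
      ((a * r - (c + t * a) * ((2 * 1 * a + 2 * t ^ 1 * b) / (2 * r))) / r ^ 2) t :=
    hnum.div (hden.sqrt hq.ne') hr.ne'
  refine h.congr_deriv ?_
  field_simp
  linear_combination a * hr2

theorem strictAntiOn_div_sqrt_quadratic {a b c : ℝ} (hc : 0 < c) (habc : a ^ 2 < b * c) :
    StrictAntiOn (fun t => (c + t * a) / √(c + 2 * t * a + t ^ 2 * b)) (Set.Ici 0) := by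
  have hb : 0 < b := pos_of_mul_pos_left ((sq_nonneg a).trans_lt habc) hc.le
  -- `b (c + 2 t a + t² b) = (b t + a)² + (b c - a²)`
  have hq : ∀ t, 0 < c + 2 * t * a + t ^ 2 * b := fun t => by
    nlinarith [sq_nonneg (b * t + a)]
  refine strictAntiOn_of_hasDerivWithinAt_neg (convex_Ici 0)
    (fun t _ => (hasDerivAt_div_sqrt_quadratic (hq t)).continuousAt.continuousWithinAt)
    (fun t _ => (hasDerivAt_div_sqrt_quadratic (hq t)).hasDerivWithinAt) fun t ht => ?_
  rw [interior_Ici] at ht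
  have hr := sqrt_pos.2 (hq t)
  exact div_neg_of_neg_of_pos (mul_neg_of_pos_of_neg ht (by linarith)) (by positivity)

section

variable {F : Type*} [NormedAddCommGroup F] [InnerProductSpace ℝ F]

theorem inner_sq_lt_norm_sq_mul_norm_sq_of_forall_ne_smul {v d : F} (hv : v ≠ 0) (hd : ∀ c : ℝ, d ≠ c • v) :
    ⟪v, d⟫ ^ 2 < ‖d‖ ^ 2 * ‖v‖ ^ 2 := by
  have hd0 : d ≠ 0 := by simpa using hd 0
  have hlt : |⟪v, d⟫| < ‖v‖ * ‖d‖ := (abs_real_inner_le_norm v d).lt_of_ne fun h => by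
    obtain ⟨r, -, hr⟩ := (norm_inner_eq_norm_iff (𝕜 := ℝ) hv hd0).1 (by rwa [norm_eq_abs])
    exact hd r hr
  calc ⟪v, d⟫ ^ 2 = |⟪v, d⟫| ^ 2 := (sq_abs _).symm
    _ < (‖v‖ * ‖d‖) ^ 2 := by gcongr
    _ = ‖d‖ ^ 2 * ‖v‖ ^ 2 := by ring

theorem cos_angle_add_smul_self (v d : F) (t : ℝ) :
    cos (angle (v + t • d) v) =
      (‖v‖ ^ 2 + t * ⟪v, d⟫) / √(‖v‖ ^ 2 + 2 * t * ⟪v, d⟫ + t ^ 2 * ‖d‖ ^ 2) / ‖v‖ := by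
  have hnorm : ‖v + t • d‖ = √(‖v‖ ^ 2 + 2 * t * ⟪v, d⟫ + t ^ 2 * ‖d‖ ^ 2) := by
    rw [← sqrt_sq (norm_nonneg _), norm_add_sq_real, inner_smul_right, norm_smul, mul_pow,
      norm_eq_abs, sq_abs]
    ring_nf
  rw [cos_angle, hnorm, inner_add_left, inner_smul_left, real_inner_self_eq_norm_sq,
    real_inner_comm, div_div]
  rfl

theorem strictMonoOn_angle_add_smul_self {v d : F} (hv : v ≠ 0) (hd : ∀ c : ℝ, d ≠ c • v) :
    StrictMonoOn (fun t : ℝ => angle (v + t • d) v) (Set.Ici 0) := by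
  have hcos : StrictAntiOn (fun t : ℝ => cos (angle (v + t • d) v)) (Set.Ici 0) := by
    have hv' := norm_pos_iff.2 hv
    simp_rw [cos_angle_add_smul_self]
    exact fun s hs t ht hst => div_lt_div_of_pos_right
      (strictAntiOn_div_sqrt_quadratic (by positivity)
        (inner_sq_lt_norm_sq_mul_norm_sq_of_forall_ne_smul hv hd) hs ht hst) hv'
  intro s hs t ht hst
  have hmem : ∀ x : F, angle x v ∈ Set.Icc 0 π := fun x => ⟨angle_nonneg x v, angle_le_pi x v⟩
  exact (strictAntiOn_cos.lt_iff_gt (hmem _) (hmem _)).1 (hcos hs ht hst)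

end

theorem disagreement_strictly_increasing_in_sigma_general
    (v d : EuclideanSpace ℝ (Fin 2)) (hv : v ≠ 0)
    (u₁ : ℝ) (hu₁ : u₁ ∈ Set.Ioo (0:ℝ) 1)
    (hnotpar : ∀ c : ℝ, d ≠ c • v) :
    StrictMonoOn
      (fun σ : ℝ =>
        InnerProductGeometry.angle (v + (σ * Real.sqrt (-2 * Real.log u₁)) • d) v / π)
      (Set.Ioi 0) := by
  have hr : 0 < √(-2 * log u₁) := sqrt_pos.2 (by linarith [log_neg hu₁.1 hu₁.2])
  intro s hs t ht hst
  exact div_lt_div_of_pos_right (strictMonoOn_angle_add_smul_self hv hnotpar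
    (mul_pos hs hr).le (mul_pos ht hr).le (mul_lt_mul_of_pos_right hst hr)) pi_pos

/-- Monotonicity of the disagreement angle under Gaussian (Box–Muller) scaling in 2-D:
fix `v ≠ 0` with angle `θv` (i.e. `v = ‖v‖ (cos θv, sin θv)`), `u₁ ∈ (0,1)`,
`u₂ ∈ [0,1]`, and let `d = (cos 2πu₂, sin 2πu₂)` be the perturbation direction,
assumed neither parallel nor antiparallel to `v`.  With
`w σ = v + σ √(−2 log u₁) • d` (the Box–Muller parametrization, whose angle `θ(σ)`
satisfies `‖v‖ sin(θ − θv) = σ√(−2 log u₁) sin(2πu₂ − θ)`), the disagreement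
`ρ(σ) = |θ(σ) − θv| / π`, i.e. the unoriented angle between `w σ` and `v` divided by
`π`, is strictly increasing in `σ` on `(0, ∞)`. -/
theorem disagreement_strictly_increasing_in_sigma
    (v d : EuclideanSpace ℝ (Fin 2)) (hv : v ≠ 0) (θv : ℝ)
    (hθv0 : v 0 = ‖v‖ * Real.cos θv) (hθv1 : v 1 = ‖v‖ * Real.sin θv)
    (u₁ u₂ : ℝ) (hu₁ : u₁ ∈ Set.Ioo (0:ℝ) 1) (hu₂ : u₂ ∈ Set.Icc (0:ℝ) 1)
    (hd0 : d 0 = Real.cos (2 * π * u₂)) (hd1 : d 1 = Real.sin (2 * π * u₂))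
    (hnotpar : ∀ c : ℝ, d ≠ c • v) :
    StrictMonoOn
      (fun σ : ℝ =>
        InnerProductGeometry.angle (v + (σ * Real.sqrt (-2 * Real.log u₁)) • d) v / π)
      (Set.Ioi 0) :=
  disagreement_strictly_increasing_in_sigma_general v d hv u₁ hu₁ hnotpar
end
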